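/- arXiv:0712.0583 — 8 statements merged into one kernel-verified Lean document; each statement's English description precedes it below -/
import Mathlib

section
/- For every y₀ > 0, the limit as ε → 0⁺ of the integral ∫_{ε}^{2y₀/ε} exp(ε t²/2 − y₀ t) dt equals 2/y₀. -/
/-!
On `[0, y₀/ε]` we have `ε t ≤ y₀`, so the integrand `exp (ε t²/2 - y₀ t)` is dominated by
`exp (-y₀ t / 2)` and tends pointwise to `exp (-y₀ t)`; by dominated convergence its integral over
`[a, y₀/ε]` tends to `∫₀^∞ exp (-y₀ t) dt = 1/y₀` whenever `a → 0⁺`. The exponent is symmetric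
about its minimum `t = y₀/ε`, so the integral over `[y₀/ε, 2y₀/ε]` equals the one over `[0, y₀/ε]`,
and the limit is `1/y₀ + 1/y₀`.
-/

open Real Set Filter Topology intervalIntegral MeasureTheory

theorem intervalIntegral.integral_upper_half_eq_lower_half {E : Type*} [NormedAddCommGroup E]
    [NormedSpace ℝ E] {f : ℝ → E} {m : ℝ} (hf : ∀ t, f (2 * m - t) = f t) :
    ∫ t in m..2 * m, f t = ∫ t in 0..m, f t := by
  have h := integral_comp_sub_left (a := 0) (b := m) f (2 * m)
  simp only [hf, sub_zero, show 2 * m - m = m by ring] at h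
  exact h.symm

lemma exp_quadratic_le_exp_neg_half_mul {ε y₀ t : ℝ} (ht : 0 ≤ t) (hεt : ε * t ≤ y₀) :
    exp (ε * t ^ 2 / 2 - y₀ * t) ≤ exp (-(y₀ / 2) * t) := by
  have := mul_le_mul_of_nonneg_right hεt ht
  exact exp_le_exp.2 (by nlinarith)

lemma tendsto_integral_exp_quadratic {y₀ : ℝ} (hy₀ : 0 < y₀) {a : ℝ → ℝ}
    (ha : Tendsto a (𝓝[>] 0) (𝓝[≥] 0)) :
    Tendsto (fun ε => ∫ t in a ε..y₀ / ε, exp (ε * t ^ 2 / 2 - y₀ * t)) (𝓝[>] 0)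
      (𝓝 (1 / y₀)) := by
  obtain ⟨ha_zero, ha_nonneg⟩ := tendsto_nhdsWithin_iff.1 ha
  have h_upper : Tendsto (fun ε : ℝ => y₀ / ε) (𝓝[>] 0) atTop := by
    simpa only [div_eq_mul_inv] using tendsto_inv_nhdsGT_zero.const_mul_atTop hy₀
  set F : ℝ → ℝ → ℝ := fun ε => (Ioc (a ε) (y₀ / ε)).indicator
    fun t => exp (ε * t ^ 2 / 2 - y₀ * t)
  have h_eq : ∀ᶠ ε in 𝓝[>] 0,
      ∫ t in Ioi 0, F ε t = ∫ t in a ε..y₀ / ε, exp (ε * t ^ 2 / 2 - y₀ * t) := by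
    filter_upwards [ha_nonneg, ha_zero.eventually (eventually_le_nhds one_pos),
      h_upper.eventually_ge_atTop 1] with ε h0 h1 h2
    rw [integral_of_le (h1.trans h2), setIntegral_indicator measurableSet_Ioc,
      inter_eq_right.2 (Ioc_subset_Ioi_self.trans (Ioi_subset_Ioi h0))]
  have h_limit : ∫ t in Ioi 0, exp (-y₀ * t) = 1 / y₀ := by
    rw [integral_exp_mul_Ioi (neg_lt_zero.2 hy₀)]
    simp
  rw [← h_limit]
  refine Tendsto.congr' h_eq (tendsto_integral_filter_of_dominated_convergence
    (fun t => exp (-(y₀ / 2) * t)) ?_ ?_ (exp_neg_integrableOn_Ioi 0 (half_pos hy₀)) ?_)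
  · exact .of_forall fun ε =>
      (by fun_prop : Continuous _).aestronglyMeasurable.indicator measurableSet_Ioc
  · filter_upwards [self_mem_nhdsWithin] with ε (hε : 0 < ε)
    refine ae_restrict_of_forall_mem measurableSet_Ioi fun t (ht : 0 < t) => ?_
    simp only [F, indicator_apply, norm_eq_abs]
    split_ifs with h
    · rw [abs_exp]
      exact exp_quadratic_le_exp_neg_half_mul ht.le
        (by rw [mul_comm]; exact (le_div_iff₀ hε).1 h.2)
    · simpa using exp_nonneg _
  · refine ae_restrict_of_forall_mem measurableSet_Ioi fun t (ht : 0 < t) => ?_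
    have h_mem : ∀ᶠ ε in 𝓝[>] 0, exp (ε * t ^ 2 / 2 - y₀ * t) = F ε t := by
      filter_upwards [ha_zero.eventually (eventually_lt_nhds ht), h_upper.eventually_ge_atTop t]
        with ε h1 h2
      exact (Set.indicator_of_mem (show t ∈ Ioc (a ε) (y₀ / ε) from ⟨h1, h2⟩)
        fun t => exp (ε * t ^ 2 / 2 - y₀ * t)).symm
    refine Tendsto.congr' h_mem (tendsto_nhdsWithin_of_tendsto_nhds ?_)
    exact (by fun_prop : Continuous fun ε : ℝ => exp (ε * t ^ 2 / 2 - y₀ * t)).tendsto' 0 _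
      (by simp)

/-- For every `y₀ > 0`, the integral `∫_{ε}^{2 y₀ / ε} exp(ε t²/2 - y₀ t) dt`
tends to `2 / y₀` as `ε → 0⁺`. -/
theorem integral_tendsto_two_div
    (y₀ : ℝ) (hy₀ : 0 < y₀) :
    Tendsto (fun ε : ℝ => ∫ t in ε..(2 * y₀ / ε), Real.exp (ε * t ^ 2 / 2 - y₀ * t))
      (𝓝[>] 0) (𝓝 (2 / y₀)) := by
  have h_split : ∀ ε : ℝ, 0 < ε → ∫ t in ε..(2 * y₀ / ε), exp (ε * t ^ 2 / 2 - y₀ * t) =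
      (∫ t in ε..y₀ / ε, exp (ε * t ^ 2 / 2 - y₀ * t)) +
        ∫ t in 0..y₀ / ε, exp (ε * t ^ 2 / 2 - y₀ * t) := by
    intro ε hε
    have h_int : ∀ a b, IntervalIntegrable (fun t => exp (ε * t ^ 2 / 2 - y₀ * t)) volume a b :=
      fun a b => (by fun_prop : Continuous _).intervalIntegrable a b
    rw [← integral_add_adjacent_intervals (h_int ε (y₀ / ε)) (h_int _ (2 * y₀ / ε)), mul_div_assoc,
      integral_upper_half_eq_lower_half fun t => by congr 1; field_simp; ring]
  have h := (tendsto_integral_exp_quadratic hy₀ (a := id)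
      (tendsto_nhdsWithin_mono_right Ioi_subset_Ici_self tendsto_id)).add
    (tendsto_integral_exp_quadratic hy₀ (a := fun _ => 0) (tendsto_const_nhdsWithin self_mem_Ici))
  rw [← add_halves (2 / y₀), div_div, show 2 / (y₀ * 2) = 1 / y₀ by field_simp]
  exact h.congr' (eventually_mem_nhdsWithin.mono fun ε hε => (h_split ε hε).symm)
end

section
/- Let y₀ > 0 and 0 < x₀ < y₀/2, and fix c with 0 < c < 2. Define, for ε > 0, Y_ε(t) = −ε t²/2 + y₀ t and x_ε(t) = x₀ exp(−Y_ε(t)) / (1 − x₀ ∫₀ᵗ exp(−Y_ε(u)) du). Then there exists ε₀ > 0 such that for all 0 < ε < ε₀: the denominator 1 − x₀ ∫₀ᵗ exp(−Y_ε(u)) du is positive for all t ∈ [0, c·y₀/ε], and x_ε(c·y₀/ε) < x₀. (Thus, despite the repulsiveness of the half-axis {x = 0, y < 0}, the orbit of ẋ = −yx + x², ẏ = −ε starting at (x₀, y₀) remains within x₀ of x = 0 for a time of order y₀/ε after crossing y = 0: this is the delay to bifurcation.) -/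
/-!
Write `Y ε t = t (y₀ - ε t / 2)` and `T ε = c y₀ / ε`. On `[0, T ε]` we have `ε t ≤ c y₀`, so the
integrand `exp (-Y ε t)` is dominated by `exp (-(1 - c / 2) y₀ t)`, which is integrable on `(0, ∞)`
because `c < 2`; by dominated convergence `∫₀^{T ε} exp (-Y ε) → ∫₀^∞ exp (-y₀ t) = 1 / y₀` as
`ε → 0⁺`. Meanwhile `Y ε (T ε) = c (1 - c / 2) y₀² / ε → ∞`. Hence
`x₀ ∫₀^{T ε} exp (-Y ε) + exp (-Y ε (T ε)) → x₀ / y₀ < 1`, which for small `ε` gives both the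
positivity of the denominator (the integral is increasing in `t`) and `x_ε (T ε) < x₀`.
-/

open Real Set Filter Topology MeasureTheory intervalIntegral

lemma tendsto_integral_exp_neg_phase {y₀ c : ℝ} (hy₀ : 0 < y₀) (hc : 0 < c) (hc' : c < 2) :
    Tendsto (fun ε : ℝ => ∫ u in (0 : ℝ)..c * y₀ / ε, exp (-(-ε * u ^ 2 / 2 + y₀ * u)))
      (𝓝[>] 0) (𝓝 y₀⁻¹) := by
  set f : ℝ → ℝ → ℝ := fun ε u => exp (-(-ε * u ^ 2 / 2 + y₀ * u)) with hf
  have hT : Tendsto (fun ε : ℝ => c * y₀ / ε) (𝓝[>] 0) atTop := by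
    simpa only [div_eq_mul_inv] using
      tendsto_inv_nhdsGT_zero.const_mul_atTop (by positivity : 0 < c * y₀)
  have hlimit : ∫ u in Ioi (0 : ℝ), exp (-y₀ * u) = y₀⁻¹ := by
    rw [integral_exp_mul_Ioi (by linarith) 0]
    simp
  rw [← hlimit]
  have hset : ∀ᶠ ε in 𝓝[>] (0 : ℝ),
      ∫ u in Ioi 0, (Iic (c * y₀ / ε)).indicator (f ε) u = ∫ u in (0 : ℝ)..c * y₀ / ε, f ε u := by
    filter_upwards [self_mem_nhdsWithin] with ε (hε : 0 < ε)
    rw [integral_of_le (by positivity), setIntegral_indicator measurableSet_Iic, Ioi_inter_Iic]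
  refine Tendsto.congr' hset (tendsto_integral_filter_of_dominated_convergence
    (fun u => exp (-((1 - c / 2) * y₀) * u)) ?_ ?_ ?_ ?_)
  · exact Eventually.of_forall fun ε =>
      (by fun_prop : Continuous (f ε)).aestronglyMeasurable.indicator measurableSet_Iic
  · filter_upwards [self_mem_nhdsWithin] with ε (hε : 0 < ε)
    filter_upwards [ae_restrict_mem measurableSet_Ioi] with u (hu : 0 < u)
    rw [norm_indicator_eq_indicator_norm]
    refine indicator_apply_le' (fun huT => ?_) (fun _ => (exp_pos _).le)
    rw [Real.norm_of_nonneg (exp_pos _).le, exp_le_exp]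
    have : ε * u ≤ c * y₀ := (le_div_iff₀' hε).1 huT
    nlinarith
  · exact exp_neg_integrableOn_Ioi 0 (by nlinarith)
  · refine Eventually.of_forall fun u => ?_
    have hcont : Tendsto (fun ε => f ε u) (𝓝[>] 0) (𝓝 (exp (-y₀ * u))) := by
      simpa [hf] using tendsto_nhdsWithin_of_tendsto_nhds
        ((by fun_prop : Continuous fun ε => f ε u).tendsto 0)
    refine hcont.congr' ?_
    filter_upwards [hT.eventually_ge_atTop u] with ε hε
    exact (indicator_of_mem (show u ∈ Iic (c * y₀ / ε) from hε) _).symm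

lemma tendsto_phase_atTop {y₀ c : ℝ} (hy₀ : 0 < y₀) (hc : 0 < c) (hc' : c < 2) :
    Tendsto (fun ε : ℝ => -ε * (c * y₀ / ε) ^ 2 / 2 + y₀ * (c * y₀ / ε)) (𝓝[>] 0) atTop := by
  have hpos : 0 < c * (1 - c / 2) * y₀ ^ 2 := mul_pos (mul_pos hc (by linarith)) (by positivity)
  refine (tendsto_inv_nhdsGT_zero.const_mul_atTop hpos).congr' ?_
  filter_upwards [self_mem_nhdsWithin] with ε (hε : 0 < ε)
  field_simp
  ring

/-- Delay to bifurcation for the transcritical dynamical bifurcation: for small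
`ε`, the Bernoulli solution starting at `(x₀, y₀)` with `0 < x₀ < y₀ / 2`
satisfies `x_ε(c y₀ / ε) < x₀` for `0 < c < 2`, the denominator staying
positive on `[0, c y₀ / ε]`. -/
theorem transcritical_delay_to_bifurcation
    (x₀ y₀ c : ℝ) (hy₀ : 0 < y₀) (hx₀ : 0 < x₀) (hx₀' : x₀ < y₀ / 2)
    (hc : 0 < c) (hc' : c < 2)
    (Y : ℝ → ℝ → ℝ) (hY : ∀ ε t, Y ε t = -ε * t ^ 2 / 2 + y₀ * t)
    (x : ℝ → ℝ → ℝ)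
    (hx : ∀ ε t, x ε t =
      x₀ * Real.exp (-Y ε t) / (1 - x₀ * ∫ u in (0 : ℝ)..t, Real.exp (-Y ε u))) :
    ∃ ε₀ > 0, ∀ ε : ℝ, 0 < ε → ε < ε₀ →
      (∀ t ∈ Set.Icc (0 : ℝ) (c * y₀ / ε),
        0 < 1 - x₀ * ∫ u in (0 : ℝ)..t, Real.exp (-Y ε u)) ∧
      x ε (c * y₀ / ε) < x₀ := by
  obtain rfl : Y = fun ε t => -ε * t ^ 2 / 2 + y₀ * t := funext fun ε => funext (hY ε)
  have hlim := ((tendsto_integral_exp_neg_phase hy₀ hc hc').const_mul x₀).add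
    (tendsto_exp_atBot.comp (tendsto_neg_atTop_atBot.comp (tendsto_phase_atTop hy₀ hc hc')))
  have hsmall : x₀ * y₀⁻¹ + 0 < 1 := by
    rw [add_zero, ← div_eq_mul_inv, div_lt_one hy₀]
    linarith
  obtain ⟨ε₀, hε₀, hsub⟩ :=
    mem_nhdsGT_iff_exists_Ioo_subset.1 (hlim.eventually (gt_mem_nhds hsmall))
  refine ⟨ε₀, hε₀, fun ε hε hεε => ?_⟩
  have hbound := hsub ⟨hε, hεε⟩
  simp only [mem_ofPred_eq, Function.comp_apply] at hbound
  have hdenom : ∀ t ∈ Icc (0 : ℝ) (c * y₀ / ε),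
      0 < 1 - x₀ * ∫ u in (0 : ℝ)..t, exp (-(-ε * u ^ 2 / 2 + y₀ * u)) := by
    intro t ht
    have hmono := integral_mono_interval le_rfl ht.1 ht.2
      (ae_of_all _ fun u => (exp_pos (-(-ε * u ^ 2 / 2 + y₀ * u))).le)
      ((by fun_prop : Continuous fun u => exp (-(-ε * u ^ 2 / 2 + y₀ * u))).intervalIntegrable (μ := volume) _ _)
    nlinarith [exp_pos (-(-ε * (c * y₀ / ε) ^ 2 / 2 + y₀ * (c * y₀ / ε)))]
  refine ⟨hdenom, ?_⟩
  rw [hx, div_lt_iff₀ (hdenom _ ⟨by positivity, le_rfl⟩)]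
  nlinarith
end

section
/- Let ε > 0 and define Φ(u, y) = (1/2)(tanh u − y)² + ε·ln(cosh u). If (u, y) : I → ℝ² is a differentiable solution of u'(t) = tanh(u(t)) − y(t), y'(t) = ε·tanh(u(t)) on an interval I, then for every t ∈ I, d/dt [Φ(u(t), y(t))] = (u'(t)/cosh(u(t)))². In particular t ↦ Φ(u(t), y(t)) is monotone nondecreasing along every solution (Φ is a Lyapunov-type function for the flow). -/
open Real Set

/-- The Lyapunov function for the system `u̇ = tanh u - y, ẏ = ε tanh u`. -/
noncomputable def PhiLyap (ε u y : ℝ) : ℝ :=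
  (1 / 2) * (Real.tanh u - y) ^ 2 + ε * Real.log (Real.cosh u)

/-! Along a solution `u' = d := tanh u - y`, the chain rule gives
`(½ d²)' = d (d / cosh² u - ε tanh u)` and `(ε log cosh u)' = ε tanh u · d`;
the `ε`-terms cancel, leaving `(d / cosh u)² ≥ 0`. -/

theorem Real.hasDerivAt_tanh (x : ℝ) : HasDerivAt tanh (1 / cosh x ^ 2) x := by
  have h := (hasDerivAt_sinh x).div (hasDerivAt_cosh x) (cosh_pos x).ne'
  have hquot : sinh / cosh = tanh := funext fun y => (tanh_eq_sinh_div_cosh y).symm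
  rwa [hquot, ← sq, ← sq, cosh_sq_sub_sinh_sq] at h

theorem HasDerivAt.tanh {f : ℝ → ℝ} {f' x : ℝ} (hf : HasDerivAt f f' x) :
    HasDerivAt (fun s => Real.tanh (f s)) (f' / Real.cosh (f x) ^ 2) x :=
  ((Real.hasDerivAt_tanh (f x)).comp x hf).congr_deriv (by ring)

theorem HasDerivAt.log_cosh {f : ℝ → ℝ} {f' x : ℝ} (hf : HasDerivAt f f' x) :
    HasDerivAt (fun s => Real.log (Real.cosh (f s))) (Real.tanh (f x) * f') x := by
  have h := hf.cosh.log (cosh_pos (f x)).ne'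
  rwa [mul_comm, mul_div_assoc, ← tanh_eq_sinh_div_cosh, mul_comm] at h

theorem HasDerivAt.phiLyap {ε : ℝ} {u y : ℝ → ℝ} {u' y' t : ℝ} (hu : HasDerivAt u u' t)
    (hy : HasDerivAt y y' t) :
    HasDerivAt (fun s => PhiLyap ε (u s) (y s))
      ((Real.tanh (u t) - y t) * (u' / Real.cosh (u t) ^ 2 - y') +
        ε * (Real.tanh (u t) * u')) t := by
  refine ((((hu.tanh.sub hy).pow 2).const_mul (1 / 2)).add
    (hu.log_cosh.const_mul ε)).congr_deriv ?_
  simp only [Pi.sub_apply, Nat.cast_ofNat]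
  ring

theorem Set.OrdConnected.monotoneOn_of_hasDerivAt_nonneg {I : Set ℝ} (hI : I.OrdConnected)
    {f f' : ℝ → ℝ} (hf : ∀ t ∈ I, HasDerivAt f (f' t) t) (hf' : ∀ t ∈ I, 0 ≤ f' t) :
    MonotoneOn f I :=
  monotoneOn_of_hasDerivWithinAt_nonneg hI.convex
    (fun t ht => (hf t ht).continuousAt.continuousWithinAt)
    (fun t ht => (hf t (interior_subset ht)).hasDerivWithinAt)
    (fun t ht => hf' t (interior_subset ht))

theorem Phi_lyapunov_general
    (ε : ℝ) (I : Set ℝ) (hI : I.OrdConnected) (u y : ℝ → ℝ)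
    (hu : ∀ t ∈ I, HasDerivAt u (Real.tanh (u t) - y t) t)
    (hy : ∀ t ∈ I, HasDerivAt y (ε * Real.tanh (u t)) t) :
    (∀ t ∈ I,
      HasDerivAt (fun s => PhiLyap ε (u s) (y s))
        (((Real.tanh (u t) - y t) / Real.cosh (u t)) ^ 2) t) ∧
    MonotoneOn (fun t => PhiLyap ε (u t) (y t)) I := by
  have hderiv : ∀ t ∈ I, HasDerivAt (fun s => PhiLyap ε (u s) (y s))
      (((tanh (u t) - y t) / cosh (u t)) ^ 2) t := fun t ht =>
    ((hu t ht).phiLyap (hy t ht)).congr_deriv (by ring)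
  exact ⟨hderiv, hI.monotoneOn_of_hasDerivAt_nonneg hderiv fun t _ => sq_nonneg _⟩

/-- Along every solution of `u̇ = tanh u - y, ẏ = ε tanh u`, the function
`Φ(u, y) = ½ (tanh u - y)² + ε ln(cosh u)` has derivative `(u' / cosh u)²`,
hence is monotone nondecreasing. -/
theorem Phi_lyapunov
    (ε : ℝ) (hε : 0 < ε) (I : Set ℝ) (hI : I.OrdConnected) (u y : ℝ → ℝ)
    (hu : ∀ t ∈ I, HasDerivAt u (Real.tanh (u t) - y t) t)
    (hy : ∀ t ∈ I, HasDerivAt y (ε * Real.tanh (u t)) t) :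
    (∀ t ∈ I,
      HasDerivAt (fun s => PhiLyap ε (u s) (y s))
        (((Real.tanh (u t) - y t) / Real.cosh (u t)) ^ 2) t) ∧
    MonotoneOn (fun t => PhiLyap ε (u t) (y t)) I :=
  Phi_lyapunov_general ε I hI u y hu hy
end

section
/- Let ε > 0 and define w(x, y) = (x − y)² − ε·ln|1 − x²|. If (x, y) : I → ℝ² is a differentiable solution of x'(t) = (1 − x(t)²)(x(t) − y(t)), y'(t) = ε·x(t) on an interval I with |x(t)| < 1 for all t ∈ I, then for every t ∈ I, d/dt [w(x(t), y(t))] = 2(1 − x(t)²)(x(t) − y(t))². In particular t ↦ w(x(t), y(t)) is monotone nondecreasing along solutions in the strip |x| < 1. -/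
open Real Set

/-- The Lyapunov function `w(x, y) = (x - y)² - ε ln|1 - x²|` for the slow-fast
system `ẋ = (1 - x²)(x - y), ẏ = ε x`. -/
noncomputable def wLyap (ε x y : ℝ) : ℝ :=
  (x - y) ^ 2 - ε * Real.log |1 - x ^ 2|

/-! Along a solution, `d/dt ε ln|1 - x²| = -2εx ẋ / (1 - x²) = -2εx(x - y)`: the factor
`1 - x²` of `ẋ` cancels, and this is exactly the `ε`-term of
`d/dt (x - y)² = 2(1 - x²)(x - y)² - 2εx(x - y)`. So `ẇ = 2(1 - x²)(x - y)²`, which is nonnegative in the strip `|x| < 1`. -/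

theorem wLyap_eq_sub_log (ε a b : ℝ) : wLyap ε a b = (a - b) ^ 2 - ε * Real.log (1 - a ^ 2) := by
  rw [wLyap, Real.log_abs]

theorem hasDerivAt_wLyap {ε : ℝ} {x y : ℝ → ℝ} {x' y' t : ℝ}
    (hx : HasDerivAt x x' t) (hy : HasDerivAt y y' t) (hxt : 1 - x t ^ 2 ≠ 0) :
    HasDerivAt (fun s => wLyap ε (x s) (y s))
      (2 * (x t - y t) * (x' - y') + 2 * ε * x t * x' / (1 - x t ^ 2)) t := by
  have hsq : HasDerivAt (fun s => (x s - y s) ^ 2) (2 * (x t - y t) * (x' - y')) t :=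
    ((hx.sub hy).pow 2).congr_deriv (by simp only [Pi.sub_apply]; ring)
  have hlog : HasDerivAt (fun s => Real.log (1 - x s ^ 2))
      (-(2 * x t * x') / (1 - x t ^ 2)) t :=
    (((hx.pow 2).const_sub 1).log hxt).congr_deriv (by simp only [Pi.pow_apply]; ring)
  simp only [wLyap_eq_sub_log]
  exact (hsq.sub (hlog.const_mul ε)).congr_deriv (by ring)

theorem hasDerivAt_wLyap_of_solution {ε : ℝ} {x y : ℝ → ℝ} {t : ℝ}
    (hx : HasDerivAt x ((1 - x t ^ 2) * (x t - y t)) t) (hy : HasDerivAt y (ε * x t) t)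
    (hxt : 1 - x t ^ 2 ≠ 0) :
    HasDerivAt (fun s => wLyap ε (x s) (y s)) (2 * (1 - x t ^ 2) * (x t - y t) ^ 2) t := by
  convert hasDerivAt_wLyap hx hy hxt using 1
  field_simp
  ring

theorem one_sub_sq_pos_of_abs_lt_one {a : ℝ} (h : |a| < 1) : 0 < 1 - a ^ 2 :=
  sub_pos.mpr ((sq_lt_one_iff_abs_lt_one a).mpr h)

theorem w_lyapunov_general
    (ε : ℝ) (I : Set ℝ) (hI : I.OrdConnected) (x y : ℝ → ℝ)
    (hx : ∀ t ∈ I, HasDerivAt x ((1 - x t ^ 2) * (x t - y t)) t)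
    (hy : ∀ t ∈ I, HasDerivAt y (ε * x t) t)
    (hstrip : ∀ t ∈ I, |x t| < 1) :
    (∀ t ∈ I,
      HasDerivAt (fun s => wLyap ε (x s) (y s))
        (2 * (1 - x t ^ 2) * (x t - y t) ^ 2) t) ∧
    MonotoneOn (fun t => wLyap ε (x t) (y t)) I := by
  have hpos : ∀ t ∈ I, 0 < 1 - x t ^ 2 := fun t ht => one_sub_sq_pos_of_abs_lt_one (hstrip t ht)
  have hderiv : ∀ t ∈ I, HasDerivAt (fun s => wLyap ε (x s) (y s))
      (2 * (1 - x t ^ 2) * (x t - y t) ^ 2) t := fun t ht =>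
    hasDerivAt_wLyap_of_solution (hx t ht) (hy t ht) (hpos t ht).ne'
  refine ⟨hderiv, monotoneOn_of_hasDerivWithinAt_nonneg hI.convex
    (fun t ht => (hderiv t ht).continuousAt.continuousWithinAt)
    (fun t ht => (hderiv t (interior_subset ht)).hasDerivWithinAt) fun t ht => ?_⟩
  have := hpos t (interior_subset ht)
  positivity

/-- Along every solution of `ẋ = (1 - x²)(x - y), ẏ = ε x` in the strip
`|x| < 1`, the function `w(x, y) = (x - y)² - ε ln|1 - x²|` has derivative
`2 (1 - x²)(x - y)²`, hence is monotone nondecreasing. -/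
theorem w_lyapunov
    (ε : ℝ) (hε : 0 < ε) (I : Set ℝ) (hI : I.OrdConnected) (x y : ℝ → ℝ)
    (hx : ∀ t ∈ I, HasDerivAt x ((1 - x t ^ 2) * (x t - y t)) t)
    (hy : ∀ t ∈ I, HasDerivAt y (ε * x t) t)
    (hstrip : ∀ t ∈ I, |x t| < 1) :
    (∀ t ∈ I,
      HasDerivAt (fun s => wLyap ε (x s) (y s))
        (2 * (1 - x t ^ 2) * (x t - y t) ^ 2) t) ∧
    MonotoneOn (fun t => wLyap ε (x t) (y t)) I :=
  w_lyapunov_general ε I hI x y hx hy hstrip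
end

section
/- Let ε > 0 and let (u, y) : [0, ∞) → ℝ² be a global differentiable solution of u'(t) = tanh(u(t)) − y(t), y'(t) = ε·tanh(u(t)) with (u(0), y(0)) ≠ (0, 0). Then both the set {t ≥ 0 : u(t) = 0} and the set {t ≥ 0 : y(t) = tanh(u(t))} are unbounded; i.e., the orbit intersects the axis u = 0 and the curve y = tanh u at arbitrarily large times. -/
/-!
If `u > 0` on `[T, ∞)`, the orbit cannot stay below the curve `y = tanh u`: there `u` increases,
so `ẏ ≥ ε tanh u(T) > 0` and `y` would exceed `1 > tanh u`. Once above the curve, it stays at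
least as far above it as it started, since where `tanh u - y` returns to its initial negative value
its derivative `(tanh u - y) / cosh² u - ε tanh u` is negative. Then `u̇ ≤ -δ` with `δ > 0` the
initial gap, and `u` reaches `0` in finite time. The symmetry `(u, y) ↦ (-u, -y)` handles
`u < 0`, so `u` vanishes at arbitrarily large times, and Rolle's theorem between two zeros of `u`
gives a zero of `u̇ = tanh u - y`.
-/

open Real Set

namespace Real

theorem hasDerivAt_tanh_s8 (x : ℝ) : HasDerivAt tanh (1 / cosh x ^ 2) x := by
  have h := (hasDerivAt_sinh x).div (hasDerivAt_cosh x) (cosh_pos x).ne'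
  rw [show sinh / cosh = tanh from funext fun z => (tanh_eq_sinh_div_cosh z).symm] at h
  exact h.congr_deriv (by rw [← cosh_sq_sub_sinh_sq x]; ring)

theorem tanh_strictMono : StrictMono tanh :=
  strictMono_of_deriv_pos fun x => by rw [(hasDerivAt_tanh_s8 x).deriv]; positivity

theorem tanh_pos {x : ℝ} (hx : 0 < x) : 0 < tanh x := by
  simpa using tanh_strictMono hx

end Real

theorem IsPreconnected.forall_pos_or_forall_neg {X α : Type*} [TopologicalSpace X]
    [LinearOrder α] [TopologicalSpace α] [OrderClosedTopology α] [Zero α] {s : Set X} {f : X → α}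
    (hs : IsPreconnected s) (hf : ContinuousOn f s) (hf₀ : ∀ x ∈ s, f x ≠ 0) :
    (∀ x ∈ s, 0 < f x) ∨ ∀ x ∈ s, f x < 0 := by
  by_contra! h
  obtain ⟨⟨a, ha, hfa⟩, b, hb, hfb⟩ := h
  obtain ⟨c, hc, hfc⟩ := hs.intermediate_value ha hb hf ⟨hfa, hfb⟩
  exact hf₀ c hc hfc

theorem exists_lt_mul_sub {c : ℝ} (hc : 0 < c) (T M : ℝ) : ∃ t, T ≤ t ∧ M < c * (t - T) :=
  ⟨T + (|M| + 1) / c, by have := (by positivity : 0 < (|M| + 1) / c); linarith, by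
    rw [add_sub_cancel_left, mul_div_cancel₀ _ hc.ne']; linarith [le_abs_self M]⟩

section MeanValue

variable {f f' : ℝ → ℝ} {T C t : ℝ}

theorem mul_sub_le_sub_of_hasDerivAt_Ici (hf : ∀ x ∈ Ici T, HasDerivAt f (f' x) x)
    (hC : ∀ x ∈ Ici T, C ≤ f' x) (ht : T ≤ t) : C * (t - T) ≤ f t - f T :=
  (convex_Ici T).mul_sub_le_image_sub_of_le_deriv
    (fun x hx => (hf x hx).continuousAt.continuousWithinAt)
    (fun x hx => (hf x (interior_subset hx)).differentiableAt.differentiableWithinAt)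
    (fun x hx => (hf x (interior_subset hx)).deriv ▸ hC x (interior_subset hx))
    T self_mem_Ici t ht ht

theorem sub_le_mul_sub_of_hasDerivAt_Ici (hf : ∀ x ∈ Ici T, HasDerivAt f (f' x) x)
    (hC : ∀ x ∈ Ici T, f' x ≤ C) (ht : T ≤ t) : f t - f T ≤ C * (t - T) :=
  (convex_Ici T).image_sub_le_mul_sub_of_deriv_le
    (fun x hx => (hf x hx).continuousAt.continuousWithinAt)
    (fun x hx => (hf x (interior_subset hx)).differentiableAt.differentiableWithinAt)
    (fun x hx => (hf x (interior_subset hx)).deriv ▸ hC x (interior_subset hx))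
    T self_mem_Ici t ht ht

end MeanValue

structure IsSolutionOn (ε : ℝ) (u y : ℝ → ℝ) (T : ℝ) : Prop where
  hasDerivAt_u : ∀ t ∈ Ici T, HasDerivAt u (tanh (u t) - y t) t
  hasDerivAt_y : ∀ t ∈ Ici T, HasDerivAt y (ε * tanh (u t)) t

namespace IsSolutionOn

variable {ε T : ℝ} {u y : ℝ → ℝ}

theorem mono (hs : IsSolutionOn ε u y T) {T' : ℝ} (hT : T ≤ T') : IsSolutionOn ε u y T' :=
  ⟨fun t ht => hs.hasDerivAt_u t (hT.trans ht), fun t ht => hs.hasDerivAt_y t (hT.trans ht)⟩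

theorem neg (hs : IsSolutionOn ε u y T) : IsSolutionOn ε (-u) (-y) T := by
  refine ⟨fun t ht => (hs.hasDerivAt_u t ht).neg.congr_deriv ?_,
    fun t ht => (hs.hasDerivAt_y t ht).neg.congr_deriv ?_⟩ <;>
  · simp only [Pi.neg_apply, tanh_neg]
    ring

theorem exists_tanh_lt (hs : IsSolutionOn ε u y T) (hε : 0 < ε) (hpos : ∀ t ∈ Ici T, 0 < u t) :
    ∃ t ∈ Ici T, tanh (u t) < y t := by
  by_contra! hbelow
  have u_mono : ∀ t ∈ Ici T, u T ≤ u t := fun t ht => by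
    simpa using mul_sub_le_sub_of_hasDerivAt_Ici (C := 0) hs.hasDerivAt_u
      (fun x hx => sub_nonneg.2 (hbelow x hx)) ht
  have hc : 0 < ε * tanh (u T) := mul_pos hε (tanh_pos (hpos T self_mem_Ici))
  have y_growth : ∀ t ∈ Ici T, ε * tanh (u T) * (t - T) ≤ y t - y T := fun t ht =>
    mul_sub_le_sub_of_hasDerivAt_Ici hs.hasDerivAt_y (fun x hx =>
      mul_le_mul_of_nonneg_left (tanh_strictMono.monotone (u_mono x hx)) hε.le) ht
  obtain ⟨t, ht, hlt⟩ := exists_lt_mul_sub hc T (1 - y T)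
  linarith [y_growth t ht, hbelow t ht, tanh_lt_one (u t)]

theorem tanh_sub_le (hs : IsSolutionOn ε u y T) (hε : 0 ≤ ε) (hpos : ∀ t ∈ Ici T, 0 < u t)
    (hlt : tanh (u T) < y T) {t : ℝ} (ht : T ≤ t) :
    tanh (u t) - y t ≤ tanh (u T) - y T := by
  have hg : ∀ x ∈ Ici T, HasDerivAt (fun x => tanh (u x) - y x)
      ((tanh (u x) - y x) / cosh (u x) ^ 2 - ε * tanh (u x)) x := fun x hx =>
    (((hasDerivAt_tanh_s8 (u x)).comp x (hs.hasDerivAt_u x hx)).sub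
      (hs.hasDerivAt_y x hx)).congr_deriv (by ring)
  refine image_le_of_deriv_right_lt_deriv_boundary (b := t) (B' := fun _ => 0)
    (fun x hx => (hg x hx.1).continuousAt.continuousWithinAt)
    (fun x hx => (hg x hx.1).hasDerivWithinAt) le_rfl (fun _ => hasDerivAt_const _ _)
    (fun x hx heq => ?_) ⟨ht, le_rfl⟩
  have hdiv : (tanh (u x) - y x) / cosh (u x) ^ 2 < 0 :=
    div_neg_of_neg_of_pos (by linarith) (by positivity)
  linarith [mul_nonneg hε (tanh_pos (hpos x hx.1)).le]

theorem not_forall_pos (hs : IsSolutionOn ε u y T) (hε : 0 < ε) : ¬ ∀ t ∈ Ici T, 0 < u t := by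
  intro hpos
  obtain ⟨t₀, ht₀, hlt⟩ := hs.exists_tanh_lt hε hpos
  have hpos₀ : ∀ t ∈ Ici t₀, 0 < u t := fun t ht => hpos t (Ici_subset_Ici.2 ht₀ ht)
  have u_decay : ∀ t ∈ Ici t₀, u t - u t₀ ≤ -(y t₀ - tanh (u t₀)) * (t - t₀) := fun t ht =>
    sub_le_mul_sub_of_hasDerivAt_Ici (hs.mono ht₀).hasDerivAt_u (fun x hx => by
      linarith [(hs.mono ht₀).tanh_sub_le hε.le hpos₀ hlt hx]) ht
  obtain ⟨t, ht, hδt⟩ := exists_lt_mul_sub (sub_pos.2 hlt) t₀ (u t₀)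
  linarith [u_decay t ht, hpos₀ t ht]

theorem exists_eq_zero (hs : IsSolutionOn ε u y T) (hε : 0 < ε) : ∃ t ∈ Ici T, u t = 0 := by
  by_contra! hne
  rcases isPreconnected_Ici.forall_pos_or_forall_neg
    (fun t ht => (hs.hasDerivAt_u t ht).continuousAt.continuousWithinAt) hne with hpos | hneg
  · exact hs.not_forall_pos hε hpos
  · exact hs.neg.not_forall_pos hε fun t ht => neg_pos.2 (hneg t ht)

end IsSolutionOn

theorem orbit_crosses_axes_unboundedly_general
    (ε : ℝ) (hε : 0 < ε) (u y : ℝ → ℝ)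
    (hu : ∀ t ∈ Set.Ici (0 : ℝ), HasDerivAt u (Real.tanh (u t) - y t) t)
    (hy : ∀ t ∈ Set.Ici (0 : ℝ), HasDerivAt y (ε * Real.tanh (u t)) t) :
    (∀ T : ℝ, ∃ t : ℝ, 0 ≤ t ∧ T ≤ t ∧ u t = 0) ∧
    (∀ T : ℝ, ∃ t : ℝ, 0 ≤ t ∧ T ≤ t ∧ y t = Real.tanh (u t)) := by
  have hs : IsSolutionOn ε u y 0 := ⟨hu, hy⟩
  have zeros : ∀ T : ℝ, ∃ t : ℝ, 0 ≤ t ∧ T ≤ t ∧ u t = 0 := fun T => by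
    obtain ⟨t, ht, hut⟩ := (hs.mono (le_max_right T 0)).exists_eq_zero hε
    exact ⟨t, (le_max_right T 0).trans ht, (le_max_left T 0).trans ht, hut⟩
  refine ⟨zeros, fun T => ?_⟩
  obtain ⟨t₁, ht₁, hT, hu₁⟩ := zeros T
  obtain ⟨t₂, -, ht₂, hu₂⟩ := zeros (t₁ + 1)
  obtain ⟨c, hc, hc₀⟩ := exists_hasDerivAt_eq_zero (by linarith)
    (fun t ht => (hu t (ht₁.trans ht.1)).continuousAt.continuousWithinAt) (hu₁.trans hu₂.symm)
    (fun t ht => hu t (ht₁.trans ht.1.le))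
  exact ⟨c, ht₁.trans hc.1.le, hT.trans hc.1.le, (sub_eq_zero.1 hc₀).symm⟩

/-- Every nonstationary global solution of `u̇ = tanh u - y, ẏ = ε tanh u`
intersects the axis `u = 0` and the curve `y = tanh u` at arbitrarily large
times. -/
theorem orbit_crosses_axes_unboundedly
    (ε : ℝ) (hε : 0 < ε) (u y : ℝ → ℝ)
    (hu : ∀ t ∈ Set.Ici (0 : ℝ), HasDerivAt u (Real.tanh (u t) - y t) t)
    (hy : ∀ t ∈ Set.Ici (0 : ℝ), HasDerivAt y (ε * Real.tanh (u t)) t)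
    (h0 : (u 0, y 0) ≠ (0, 0)) :
    (∀ T : ℝ, ∃ t : ℝ, 0 ≤ t ∧ T ≤ t ∧ u t = 0) ∧
    (∀ T : ℝ, ∃ t : ℝ, 0 ≤ t ∧ T ≤ t ∧ y t = Real.tanh (u t)) :=
  orbit_crosses_axes_unboundedly_general ε hε u y hu hy
end

section
/- Let ε > 0 and let (x, y) : [s, t] → ℝ² (s < t) be a differentiable solution of x'(τ) = (1 − x(τ)²)(x(τ) − y(τ)), y'(τ) = ε·x(τ) with |x(τ)| < 1 for all τ ∈ (s, t) and x(s) = x(t) = 0. Then y(t)² − y(s)² = 2ε ∫_s^t x(τ)² dτ ≤ 2ε·(t − s). -/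
/-!
Along a solution, `E = y² - ε log (1 - x²)` satisfies `E' = 2ε y x + 2ε x (x - y) = 2ε x²`:
the factor `1 - x²` of `ẋ` cancels against the derivative of the logarithm. At a zero of `x`
the energy is `y²`, so integrating `E'` between two zeros gives the identity, and `x² ≤ 1` on
the interval gives the bound.
-/

open Real Set intervalIntegral

namespace SlowFast

noncomputable def energy (ε : ℝ) (x y : ℝ → ℝ) (τ : ℝ) : ℝ :=
  y τ ^ 2 - ε * log (1 - x τ ^ 2)

theorem hasDerivAt_energy {ε τ : ℝ} {x y : ℝ → ℝ}
    (hx : HasDerivAt x ((1 - x τ ^ 2) * (x τ - y τ)) τ) (hy : HasDerivAt y (ε * x τ) τ)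
    (hx1 : x τ ^ 2 ≠ 1) :
    HasDerivAt (energy ε x y) (2 * ε * x τ ^ 2) τ := by
  have hne : 1 - x τ ^ 2 ≠ 0 := sub_ne_zero.2 hx1.symm
  have hlog := ((hx.fun_pow 2).const_sub 1).log hne
  refine ((hy.fun_pow 2).fun_sub (hlog.const_mul ε)).congr_deriv ?_
  field_simp
  ring

theorem energy_of_eq_zero {ε τ : ℝ} {x y : ℝ → ℝ} (h : x τ = 0) :
    energy ε x y τ = y τ ^ 2 := by
  simp [energy, h]

end SlowFast

theorem sq_lt_one_of_mem_Icc {f : ℝ → ℝ} {s t τ : ℝ} (hf : ∀ τ ∈ Ioo s t, |f τ| < 1)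
    (hs : f s = 0) (ht : f t = 0) (hτ : τ ∈ Icc s t) : f τ ^ 2 < 1 := by
  rcases eq_endpoints_or_mem_Ioo_of_mem_Icc hτ with rfl | rfl | hτ
  · simp [hs]
  · simp [ht]
  · simpa using sq_lt_sq' (abs_lt.1 (hf τ hτ)).1 (abs_lt.1 (hf τ hτ)).2

open SlowFast in
/-- Between two consecutive zeros of `x`, along a solution of
`ẋ = (1 - x²)(x - y), ẏ = ε x` in the strip `|x| < 1`, one has
`y(t)² - y(s)² = 2ε ∫_s^t x² ≤ 2ε (t - s)`. -/
theorem y_sq_increment_between_zeros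
    (ε s t : ℝ) (hε : 0 < ε) (hst : s < t) (x y : ℝ → ℝ)
    (hx : ∀ τ ∈ Set.Icc s t, HasDerivAt x ((1 - x τ ^ 2) * (x τ - y τ)) τ)
    (hy : ∀ τ ∈ Set.Icc s t, HasDerivAt y (ε * x τ) τ)
    (hstrip : ∀ τ ∈ Set.Ioo s t, |x τ| < 1)
    (hxs : x s = 0) (hxt : x t = 0) :
    y t ^ 2 - y s ^ 2 = (2 * ε * ∫ τ in s..t, x τ ^ 2) ∧
    y t ^ 2 - y s ^ 2 ≤ 2 * ε * (t - s) := by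
  have hx2 : ∀ τ ∈ Icc s t, x τ ^ 2 < 1 := fun τ hτ =>
    sq_lt_one_of_mem_Icc hstrip hxs hxt hτ
  have hcont : ContinuousOn x (Icc s t) := fun τ hτ => (hx τ hτ).continuousAt.continuousWithinAt
  have hftc := integral_eq_sub_of_hasDerivAt (f' := fun τ => 2 * ε * x τ ^ 2)
    (fun τ hτ => by
      rw [uIcc_of_le hst.le] at hτ
      exact hasDerivAt_energy (hx τ hτ) (hy τ hτ) (hx2 τ hτ).ne)
    ((continuousOn_const.mul (hcont.pow 2)).intervalIntegrable_of_Icc hst.le)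
  have heq : y t ^ 2 - y s ^ 2 = 2 * ε * ∫ τ in s..t, x τ ^ 2 := by
    rw [← integral_const_mul, hftc, energy_of_eq_zero hxt, energy_of_eq_zero hxs]
  have hbound : (∫ τ in s..t, x τ ^ 2) ≤ t - s := by
    have := norm_integral_le_of_norm_le_const (C := 1) (f := fun τ => x τ ^ 2) (a := s) (b := t)
      fun τ hτ => by
        rw [uIoc_of_le hst.le] at hτ
        simpa using (hx2 τ (Ioc_subset_Icc_self hτ)).le
    rw [one_mul, abs_of_pos (sub_pos.2 hst)] at this
    exact (le_abs_self _).trans this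
  exact ⟨heq, heq ▸ mul_le_mul_of_nonneg_left hbound (by positivity)⟩
end

section
/- Let ε > 0 and let (x, y) : [0, ∞) → ℝ² be a global differentiable solution of x'(t) = (1 − x(t)²)(x(t) − y(t)), y'(t) = ε·x(t) with |x(0)| < 1 and (x(0), y(0)) ≠ (0, 0). Then sup_{t ≥ 0} w(x(t), y(t)) = +∞, where w(x, y) = (x − y)² − ε·ln|1 − x²|. In particular, the values |y(t_n)| at the successive zeros t_n of x form an unbounded sequence, and the orbit accumulates arbitrarily close to the lines x = −1 and x = 1. -/
/-!
Inside the strip `w` is a Lyapunov function: along a solution, `d/dt w = 2 (1 - x²) (x - y)² ≥ 0`.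
If `w ≤ M` along the orbit, then `1 - x² ≥ exp (-M / ε)`, hence `∫₀^∞ (x - y)² < ∞`.
Since `y' = ε x` gives `(e^{-ε t} y²)' ≥ -ε e^{-ε t} (x - y)²` and `y` stays bounded,
`y(t)²` is at most `ε ∫_t^∞ (x - y)²`. So the orbit returns arbitrarily close to the origin,
where `w` is close to `w(0, 0) = 0`, contradicting `w(x t, y t) ≥ w(x 0, y 0) > 0`.
-/

open Real Set Filter Topology MeasureTheory

theorem pos_of_hasDerivAt_eq_mul {z a : ℝ → ℝ} (ha : ContinuousOn a (Ici 0))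
    (hz : ∀ t ∈ Ici (0 : ℝ), HasDerivAt z (a t * z t) t) (h0 : 0 < z 0) :
    ∀ t ∈ Ici (0 : ℝ), 0 < z t := by
  have hā : Continuous fun s => a (max s 0) :=
    ha.comp_continuous (continuous_id.max continuous_const) fun s => le_max_right s 0
  set A : ℝ → ℝ := fun t => ∫ s in (0 : ℝ)..t, a (max s 0)
  have hA : ∀ t ∈ Ici (0 : ℝ), HasDerivAt A (a t) t := fun t ht => by
    have := intervalIntegral.integral_hasDerivAt_right (hā.intervalIntegrable 0 t)
      hā.aestronglyMeasurable.stronglyMeasurableAtFilter hā.continuousAt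
    rwa [max_eq_left (mem_Ici.mp ht)] at this
  have hderiv : ∀ t ∈ Ici (0 : ℝ), HasDerivAt (fun s => z s * exp (-A s)) 0 t := fun t ht =>
    ((hz t ht).mul (hA t ht).neg.exp).congr_deriv (by ring)
  intro t ht
  have hconst := constant_of_has_deriv_right_zero
    (fun s hs => (hderiv s hs.1).continuousAt.continuousWithinAt)
    (fun s hs => (hderiv s hs.1).hasDerivWithinAt) t ⟨ht, le_rfl⟩
  have : 0 < z t * exp (-A t) := hconst ▸ mul_pos h0 (exp_pos _)
  exact pos_of_mul_pos_left this (exp_pos _).le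

theorem sq_le_exp_mul_sq_add_integral {x y : ℝ → ℝ} {ε t T : ℝ} (hε : 0 ≤ ε) (htT : t ≤ T)
    (hx : ContinuousOn x (Icc t T)) (hy : ∀ s ∈ Icc t T, HasDerivAt y (ε * x s) s) :
    y t ^ 2 ≤ exp (ε * (t - T)) * y T ^ 2 + ε * ∫ s in t..T, (x s - y s) ^ 2 := by
  have hyc : ContinuousOn y (Icc t T) := fun s hs => (hy s hs).continuousAt.continuousWithinAt
  set g : ℝ → ℝ := fun s => exp (ε * (t - s)) * y s ^ 2
  have hg : ∀ s ∈ Icc t T,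
      HasDerivAt g (exp (ε * (t - s)) * (ε * (2 * x s * y s - y s ^ 2))) s := fun s hs => by
    have he := (((hasDerivAt_id s).const_sub t).const_mul ε).exp
    exact (he.fun_mul ((hy s hs).fun_pow 2)).congr_deriv (by simp; ring)
  -- `2xy - y² = x² - (x - y)² ≥ -(x - y)²`, and the damping factor lies in `(0, 1]`
  have hlower : ∀ s ∈ Ioo t T,
      -ε * (x s - y s) ^ 2 ≤ exp (ε * (t - s)) * (ε * (2 * x s * y s - y s ^ 2)) := by
    intro s hs
    have he : exp (ε * (t - s)) ≤ 1 := exp_le_one_iff.mpr (by nlinarith [hs.1])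
    have hq : -ε * (x s - y s) ^ 2 ≤ ε * (2 * x s * y s - y s ^ 2) := by
      nlinarith [mul_nonneg hε (sq_nonneg (x s))]
    calc -ε * (x s - y s) ^ 2
        ≤ exp (ε * (t - s)) * (-ε * (x s - y s) ^ 2) := by
          nlinarith [mul_nonneg hε (sq_nonneg (x s - y s))]
      _ ≤ _ := mul_le_mul_of_nonneg_left hq (exp_pos _).le
  have key := intervalIntegral.integral_le_sub_of_hasDeriv_right_of_le
    (φ := fun s => -ε * (x s - y s) ^ 2) htT
    (fun s hs => (hg s hs).continuousAt.continuousWithinAt)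
    (fun s hs => (hg s (Ioo_subset_Icc_self hs)).hasDerivWithinAt)
    (continuousOn_const.mul ((hx.sub hyc).pow 2)).integrableOn_Icc hlower
  simp only [g, sub_self, mul_zero, exp_zero, one_mul, intervalIntegral.integral_const_mul] at key
  linarith

theorem exists_le_of_integral_le {f : ℝ → ℝ} {a b c : ℝ} (hab : a < b)
    (hf : IntervalIntegrable f volume a b) (h : ∫ x in a..b, f x ≤ c * (b - a)) :
    ∃ x ∈ Ioc a b, f x ≤ c := by
  have hlen : 0 < b - a := sub_pos.mpr hab
  obtain ⟨x, hx, hfx⟩ := exists_le_setAverage (by simp [hab]) (by simp)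
    ((intervalIntegrable_iff_integrableOn_Ioc_of_le hab.le).mp hf)
  refine ⟨x, hx, hfx.trans ?_⟩
  rw [setAverage_eq, Real.volume_real_Ioc_of_le hab.le, ← intervalIntegral.integral_of_le hab.le,
    smul_eq_mul, inv_mul_le_iff₀ hlen]
  linarith

-- the function `w` of the statement
noncomputable def lyapunov (ε a b : ℝ) : ℝ := (a - b) ^ 2 - ε * log |1 - a ^ 2|

section lyapunov

variable {ε a b : ℝ}

theorem lyapunov_pos (hε : 0 < ε) (ha : |a| < 1) (hab : (a, b) ≠ (0, 0)) :
    0 < lyapunov ε a b := by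
  have hsq : a ^ 2 < 1 := (sq_lt_one_iff_abs_lt_one a).mpr ha
  rcases eq_or_ne a 0 with rfl | ha0
  · have hb : b ≠ 0 := fun hb => hab (by rw [hb])
    simpa [lyapunov] using sq_pos_of_ne_zero hb
  · have hlog : log |1 - a ^ 2| < 0 :=
      log_neg (by positivity) (by rw [abs_of_pos (by linarith)]; linarith [sq_pos_of_ne_zero ha0])
    unfold lyapunov
    nlinarith [sq_nonneg (a - b)]

theorem sq_sub_le_lyapunov (hε : 0 ≤ ε) (ha : 0 < 1 - a ^ 2) : (a - b) ^ 2 ≤ lyapunov ε a b := by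
  have : log |1 - a ^ 2| ≤ 0 :=
    log_nonpos (abs_nonneg _) (by rw [abs_of_pos ha]; linarith [sq_nonneg a])
  unfold lyapunov
  nlinarith

theorem exp_neg_div_le_one_sub_sq {M : ℝ} (hε : 0 < ε) (ha : 0 < 1 - a ^ 2)
    (hM : lyapunov ε a b ≤ M) : exp (-(M / ε)) ≤ 1 - a ^ 2 := by
  rw [← abs_of_pos ha, ← exp_log (abs_pos.mpr ha.ne'), exp_le_exp, neg_le, le_div_iff₀ hε]
  unfold lyapunov at hM
  nlinarith [sq_nonneg (a - b)]

theorem continuousAt_lyapunov : ContinuousAt (fun p : ℝ × ℝ => lyapunov ε p.1 p.2) 0 := by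
  unfold lyapunov
  refine ((continuous_fst.sub continuous_snd).pow 2).continuousAt.sub
    (continuousAt_const.mul (ContinuousAt.log ?_ (by simp)))
  fun_prop

end lyapunov

structure IsSlowFastSolution (ε : ℝ) (x y : ℝ → ℝ) : Prop where
  hasDerivAt_x : ∀ t ∈ Ici (0 : ℝ), HasDerivAt x ((1 - x t ^ 2) * (x t - y t)) t
  hasDerivAt_y : ∀ t ∈ Ici (0 : ℝ), HasDerivAt y (ε * x t) t

namespace IsSlowFastSolution

variable {ε : ℝ} {x y : ℝ → ℝ}

theorem continuousOn_x (h : IsSlowFastSolution ε x y) : ContinuousOn x (Ici 0) :=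
  fun t ht => (h.hasDerivAt_x t ht).continuousAt.continuousWithinAt

theorem continuousOn_y (h : IsSlowFastSolution ε x y) : ContinuousOn y (Ici 0) :=
  fun t ht => (h.hasDerivAt_y t ht).continuousAt.continuousWithinAt

theorem one_sub_sq_pos (h : IsSlowFastSolution ε x y) (hx0 : |x 0| < 1) :
    ∀ t ∈ Ici (0 : ℝ), 0 < 1 - x t ^ 2 := by
  refine pos_of_hasDerivAt_eq_mul (a := fun t => -2 * x t * (x t - y t))
    ((continuousOn_const.mul h.continuousOn_x).mul (h.continuousOn_x.sub h.continuousOn_y))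
    (fun t ht => ((h.hasDerivAt_x t ht).fun_pow 2).const_sub 1 |>.congr_deriv (by ring)) ?_
  linarith [(sq_lt_one_iff_abs_lt_one (x 0)).mpr hx0]

theorem hasDerivAt_lyapunov (h : IsSlowFastSolution ε x y) (hx0 : |x 0| < 1) :
    ∀ t ∈ Ici (0 : ℝ), HasDerivAt (fun s => lyapunov ε (x s) (y s))
      (2 * (1 - x t ^ 2) * (x t - y t) ^ 2) t := by
  intro t ht
  have hz := ((h.hasDerivAt_x t ht).fun_pow 2).const_sub 1
  have hz0 := (h.one_sub_sq_pos hx0 t ht).ne'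
  have hW := (((h.hasDerivAt_x t ht).fun_sub (h.hasDerivAt_y t ht)).fun_pow 2).fun_sub
    ((hz.log hz0).const_mul ε)
  simp only [lyapunov, log_abs]
  refine hW.congr_deriv ?_
  field_simp
  ring

theorem lyapunov_monotoneOn (h : IsSlowFastSolution ε x y) (hx0 : |x 0| < 1) :
    MonotoneOn (fun t => lyapunov ε (x t) (y t)) (Ici 0) :=
  monotoneOn_of_hasDerivWithinAt_nonneg (convex_Ici 0)
    (fun t ht => (h.hasDerivAt_lyapunov hx0 t ht).continuousAt.continuousWithinAt)
    (fun t ht => (h.hasDerivAt_lyapunov hx0 t (interior_subset ht)).hasDerivWithinAt)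
    (fun t ht => by have := h.one_sub_sq_pos hx0 t (interior_subset ht); positivity)

theorem two_mul_integral_sq_sub_le (h : IsSlowFastSolution ε x y) (hx0 : |x 0| < 1) {δ s T : ℝ}
    (hδ : ∀ t ∈ Ici (0 : ℝ), δ ≤ 1 - x t ^ 2) (hs : 0 ≤ s) (hsT : s ≤ T) :
    2 * δ * ∫ u in s..T, (x u - y u) ^ 2 ≤
      lyapunov ε (x T) (y T) - lyapunov ε (x s) (y s) := by
  have hW : ∀ u ∈ Icc s T, HasDerivAt (fun t => lyapunov ε (x t) (y t))
      (2 * (1 - x u ^ 2) * (x u - y u) ^ 2) u :=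
    fun u hu => h.hasDerivAt_lyapunov hx0 u (hs.trans hu.1)
  have hv : ContinuousOn (fun u => x u - y u) (Icc s T) :=
    (h.continuousOn_x.sub h.continuousOn_y).mono (Icc_subset_Ici_iff hsT |>.mpr hs)
  rw [← intervalIntegral.integral_const_mul]
  refine intervalIntegral.integral_le_sub_of_hasDeriv_right_of_le hsT
    (fun u hu => (hW u hu).continuousAt.continuousWithinAt)
    (fun u hu => (hW u (Ioo_subset_Icc_self hu)).hasDerivWithinAt)
    (continuousOn_const.mul (hv.pow 2)).integrableOn_Icc (fun u hu => ?_)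
  have := hδ u (hs.trans hu.1.le)
  nlinarith [sq_nonneg (x u - y u)]

section bounded

variable {M : ℝ}

theorem eventually_integral_sq_sub_lt (h : IsSlowFastSolution ε x y) (hε : 0 < ε)
    (hx0 : |x 0| < 1) (hM : ∀ t, 0 ≤ t → lyapunov ε (x t) (y t) ≤ M) {θ : ℝ} (hθ : 0 < θ) :
    ∀ᶠ t in atTop, ∀ T, t ≤ T → ∫ u in t..T, (x u - y u) ^ 2 < θ := by
  set W := fun t => lyapunov ε (x t) (y t)
  set δ := exp (-(M / ε))
  have hδ : ∀ t ∈ Ici (0 : ℝ), δ ≤ 1 - x t ^ 2 :=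
    fun t ht => exp_neg_div_le_one_sub_sq hε (h.one_sub_sq_pos hx0 t ht) (hM t ht)
  have hbdd : BddAbove (W '' Ici 0) := ⟨M, by rintro _ ⟨t, ht, rfl⟩; exact hM t ht⟩
  -- `W` increases to its supremum, so `2 δ ∫_t^T (x - y)² ≤ W T - W t ≤ sup W - W T₁ < 2 δ θ`
  obtain ⟨_, ⟨T₁, hT₁, rfl⟩, hT₁lt⟩ := exists_lt_of_lt_csSup (nonempty_Ici.image W)
    (sub_lt_self (sSup (W '' Ici 0)) (by positivity : 0 < 2 * δ * θ))
  filter_upwards [eventually_ge_atTop T₁] with t ht T htT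
  have hint := h.two_mul_integral_sq_sub_le hx0 hδ (hT₁.trans ht) htT
  have hWT : W T ≤ sSup (W '' Ici 0) := le_csSup hbdd ⟨T, hT₁.trans (ht.trans htT), rfl⟩
  have hWt : W T₁ ≤ W t := h.lyapunov_monotoneOn hx0 hT₁ (hT₁.trans ht) ht
  exact lt_of_mul_lt_mul_left (by linarith) (by positivity : 0 ≤ 2 * δ)

theorem sq_y_le_of_forall_integral_le (h : IsSlowFastSolution ε x y) (hε : 0 < ε) (hx0 : |x 0| < 1)
    (hM : ∀ t, 0 ≤ t → lyapunov ε (x t) (y t) ≤ M) {t θ : ℝ} (ht : 0 ≤ t)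
    (htail : ∀ T, t ≤ T → ∫ u in t..T, (x u - y u) ^ 2 ≤ θ) : y t ^ 2 ≤ ε * θ := by
  have hy_bdd : ∀ T, 0 ≤ T → y T ^ 2 ≤ 2 * (1 + M) := by
    intro T hT
    have hx := h.one_sub_sq_pos hx0 T hT
    have hv := (sq_sub_le_lyapunov hε.le hx (b := y T)).trans (hM T hT)
    nlinarith [sq_nonneg (2 * x T - y T)]
  have hlim : Tendsto (fun T => exp (ε * (t - T)) * (2 * (1 + M)) + ε * θ) atTop
      (𝓝 (0 * (2 * (1 + M)) + ε * θ)) :=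
    ((tendsto_exp_atBot.comp ((tendsto_atBot_add_const_left _ t
      tendsto_neg_atTop_atBot).const_mul_atBot hε)).mul_const _).add_const _
  rw [zero_mul, zero_add] at hlim
  refine ge_of_tendsto hlim ?_
  filter_upwards [eventually_ge_atTop t] with T htT
  have hIcc : Icc t T ⊆ Ici 0 := Icc_subset_Ici_iff htT |>.mpr ht
  calc y t ^ 2
      ≤ exp (ε * (t - T)) * y T ^ 2 + ε * ∫ s in t..T, (x s - y s) ^ 2 :=
        sq_le_exp_mul_sq_add_integral hε.le htT (h.continuousOn_x.mono hIcc)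
          fun s hs => h.hasDerivAt_y s (hIcc hs)
    _ ≤ _ := by gcongr; exacts [hy_bdd T (ht.trans htT), htail T htT]

theorem frequently_sq_sub_le_and_sq_y_le (h : IsSlowFastSolution ε x y) (hε : 0 < ε)
    (hx0 : |x 0| < 1) (hM : ∀ t, 0 ≤ t → lyapunov ε (x t) (y t) ≤ M) {θ : ℝ} (hθ : 0 < θ) :
    ∃ᶠ t in atTop, (x t - y t) ^ 2 ≤ θ ∧ y t ^ 2 ≤ ε * θ := by
  obtain ⟨T₁, hT₁⟩ := eventually_atTop.mp
    ((h.eventually_integral_sq_sub_lt hε hx0 hM hθ).and (eventually_ge_atTop 0))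
  refine frequently_atTop.mpr fun a => ?_
  set s := max a T₁
  have hs : T₁ ≤ s := le_max_right a T₁
  have hv : ContinuousOn (fun u => x u - y u) (Icc s (s + 1)) :=
    (h.continuousOn_x.sub h.continuousOn_y).mono
      (Icc_subset_Ici_iff (by linarith) |>.mpr (hT₁ s hs).2)
  obtain ⟨t, ⟨hst, -⟩, hvt⟩ := exists_le_of_integral_le (lt_add_one s)
    ((hv.pow 2).intervalIntegrable_of_Icc (by linarith))
    (by simpa using ((hT₁ s hs).1 (s + 1) (by linarith)).le)
  obtain ⟨htail, ht0⟩ := hT₁ t (by linarith)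
  exact ⟨t, (le_max_left a T₁).trans hst.le, hvt,
    h.sq_y_le_of_forall_integral_le hε hx0 hM ht0 fun T hT => (htail T hT).le⟩

theorem mapClusterPt_zero (h : IsSlowFastSolution ε x y) (hε : 0 < ε) (hx0 : |x 0| < 1)
    (hM : ∀ t, 0 ≤ t → lyapunov ε (x t) (y t) ≤ M) :
    MapClusterPt (0 : ℝ × ℝ) atTop fun t => (x t, y t) := by
  refine mapClusterPt_iff_frequently.mpr fun U hU => ?_
  obtain ⟨ρ, hρ, hball⟩ := Metric.mem_nhds_iff.mp hU
  have hθ : (1 + ε) * (ρ ^ 2 / (4 * (1 + ε))) = ρ ^ 2 / 4 := by field_simp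
  refine (h.frequently_sq_sub_le_and_sq_y_le hε hx0 hM (θ := ρ ^ 2 / (4 * (1 + ε)))
    (by positivity)).mono fun t ⟨hv, hy⟩ => hball ?_
  rw [mem_ball_zero_iff, Prod.norm_def, Real.norm_eq_abs, Real.norm_eq_abs, max_lt_iff]
  constructor <;> refine abs_lt_of_sq_lt_sq ?_ hρ.le <;>
    nlinarith [sq_nonneg (x t - 2 * y t), sq_pos_of_pos hρ]

end bounded

end IsSlowFastSolution

/-- Along every nonstationary global solution of
`ẋ = (1 - x²)(x - y), ẏ = ε x` starting in the strip `|x| < 1`, the Lyapunov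
function `w(x, y) = (x - y)² - ε ln|1 - x²|` is unbounded above. -/
theorem w_unbounded_along_orbit
    (ε : ℝ) (hε : 0 < ε) (x y : ℝ → ℝ)
    (hx : ∀ t ∈ Set.Ici (0 : ℝ), HasDerivAt x ((1 - x t ^ 2) * (x t - y t)) t)
    (hy : ∀ t ∈ Set.Ici (0 : ℝ), HasDerivAt y (ε * x t) t)
    (hx0 : |x 0| < 1) (h0 : (x 0, y 0) ≠ (0, 0)) :
    ∀ M : ℝ, ∃ t : ℝ, 0 ≤ t ∧
      M < (x t - y t) ^ 2 - ε * Real.log |1 - x t ^ 2| := by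
  have h : IsSlowFastSolution ε x y := ⟨hx, hy⟩
  intro M
  by_contra! hM
  have hW0 : lyapunov ε 0 0 < lyapunov ε (x 0) (y 0) := by
    simpa [lyapunov] using lyapunov_pos hε hx0 h0
  obtain ⟨t, hlt, ht⟩ := ((h.mapClusterPt_zero hε hx0 hM).frequently
    (continuousAt_lyapunov.eventually_lt continuousAt_const hW0)).and_eventually
    (eventually_ge_atTop 0) |>.exists
  exact hlt.not_ge (h.lyapunov_monotoneOn hx0 self_mem_Ici ht ht)
end

section
/- Let ε > 0 and let (x, y) : [0, ∞) → ℝ² be a differentiable solution of x'(t) = (1 − x(t)²)(x(t) − y(t)), y'(t) = ε·x(t) with x(0) > 1 and y(0) ≥ x(0). Then for all t ≥ 0 one has x(t) > 1 and y(t) ≥ x(t); i.e., the region {(x, y) : x > 1, y ≥ x} is positively invariant. -/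
open Set

section LinearODE

variable {E : Type*} [NormedAddCommGroup E] [NormedSpace ℝ E]

theorem eqOn_zero_of_hasDerivAt_smul_self_of_eq_zero {a : ℝ → ℝ} {g : ℝ → E} {c d : ℝ}
    (ha : ContinuousOn a (Icc c d)) (hg : ∀ t ∈ Icc c d, HasDerivAt g (a t • g t) t)
    (hd : g d = 0) : EqOn g 0 (Icc c d) := by
  obtain ⟨K, hK⟩ := isCompact_Icc.exists_bound_of_continuousOn ha
  have hLip : ∀ t ∈ Ioc c d, LipschitzOnWith K.toNNReal (fun v : E ↦ a t • v) univ := by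
    intro t ht
    refine ((lipschitzWith_smul (a t)).weaken ?_).lipschitzOnWith
    rw [← norm_toNNReal]
    exact Real.toNNReal_le_toNNReal (hK t (Ioc_subset_Icc_self ht))
  exact ODE_solution_unique_of_mem_Icc_left hLip
    (fun t ht ↦ (hg t ht).continuousAt.continuousWithinAt)
    (fun t ht ↦ (hg t (Ioc_subset_Icc_self ht)).hasDerivWithinAt) (fun _ _ ↦ mem_univ _)
    continuousOn_const
    (fun t _ ↦ by rw [Pi.zero_apply, smul_zero]; exact hasDerivWithinAt_const t _ 0)
    (fun _ _ ↦ mem_univ _) hd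

end LinearODE

theorem pos_of_hasDerivAt_mul_self {a g : ℝ → ℝ} {c : ℝ} (ha : ContinuousOn a (Ici c))
    (hg : ∀ t ∈ Ici c, HasDerivAt g (a t * g t) t) (hc : 0 < g c) : ∀ t ∈ Ici c, 0 < g t := by
  intro t ht
  by_contra! hgt
  have hcont : ContinuousOn g (Icc c t) := fun s hs ↦
    (hg s (Icc_subset_Ici_self hs)).continuousAt.continuousWithinAt
  obtain ⟨s, hs, hgs⟩ := intermediate_value_Icc' (mem_Ici.mp ht) hcont ⟨hgt, hc.le⟩
  have hsub : Icc c s ⊆ Ici c := Icc_subset_Ici_self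
  exact hc.ne' <| eqOn_zero_of_hasDerivAt_smul_self_of_eq_zero (ha.mono hsub)
    (fun r hr ↦ hg r (hsub hr)) hgs (left_mem_Icc.mpr hs.1)

theorem image_le_of_deriv_lt_deriv_boundary_Ici {f f' B B' : ℝ → ℝ} {c : ℝ}
    (hf : ∀ t ∈ Ici c, HasDerivAt f (f' t) t) (hB : ∀ t ∈ Ici c, HasDerivAt B (B' t) t)
    (hc : f c ≤ B c) (bound : ∀ t ∈ Ici c, f t = B t → f' t < B' t) :
    ∀ t ∈ Ici c, f t ≤ B t := fun _ ht ↦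
  image_le_of_deriv_right_lt_deriv_boundary'
    (fun s hs ↦ (hf s (Icc_subset_Ici_self hs)).continuousAt.continuousWithinAt)
    (fun s hs ↦ (hf s (Ico_subset_Ici_self hs)).hasDerivWithinAt) hc
    (fun s hs ↦ (hB s (Icc_subset_Ici_self hs)).continuousAt.continuousWithinAt)
    (fun s hs ↦ (hB s (Ico_subset_Ici_self hs)).hasDerivWithinAt)
    (fun s hs ↦ bound s (Ico_subset_Ici_self hs)) ⟨ht, le_rfl⟩

/-- The region `{(x, y) : x > 1, y ≥ x}` is positively invariant for the
slow-fast system `ẋ = (1 - x²)(x - y), ẏ = ε x`. -/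
theorem region_positively_invariant
    (ε : ℝ) (hε : 0 < ε) (x y : ℝ → ℝ)
    (hx : ∀ t ∈ Set.Ici (0 : ℝ), HasDerivAt x ((1 - x t ^ 2) * (x t - y t)) t)
    (hy : ∀ t ∈ Set.Ici (0 : ℝ), HasDerivAt y (ε * x t) t)
    (hx0 : 1 < x 0) (hyx0 : x 0 ≤ y 0) :
    ∀ t ∈ Set.Ici (0 : ℝ), 1 < x t ∧ x t ≤ y t := by
  -- `x - 1` solves the linear equation `g' = (1 + x)(y - x) g`, and by backward
  -- uniqueness it cannot reach zero.
  have hx1 : ∀ t ∈ Ici (0 : ℝ), 1 < x t := by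
    have hrate : ContinuousOn (fun t ↦ (1 + x t) * (y t - x t)) (Ici 0) := fun t ht ↦
      (((hx t ht).continuousAt.const_add 1).mul
        ((hy t ht).continuousAt.sub (hx t ht).continuousAt)).continuousWithinAt
    have hpos := pos_of_hasDerivAt_mul_self hrate
      (fun t ht ↦ ((hx t ht).sub_const 1).congr_deriv (by ring)) (sub_pos.mpr hx0)
    exact fun t ht ↦ sub_pos.mp (hpos t ht)
  -- On the diagonal `ẋ = 0 < ε x = ẏ`, so the trajectory cannot cross it.
  refine fun t ht ↦ ⟨hx1 t ht, image_le_of_deriv_lt_deriv_boundary_Ici hx hy hyx0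
    (fun s hs hxy ↦ ?_) t ht⟩
  rw [sub_eq_zero.mpr hxy, mul_zero]
  exact mul_pos hε (zero_lt_one.trans (hx1 s hs))
end
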